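/- Let S = k[y₀,…,y₄] and f₀,…,f₆ be the seven cubics defining the projected Veronese surface in ℙ⁴ (as listed). Then the element Γ = −y₁∧y₂∧y₃ ⊗ f₀ + (y₀∧y₂∧y₃ − y₁∧y₂∧y₄) ⊗ f₁ + (y₀∧y₂∧y₄ − y₁∧y₃∧y₄) ⊗ f₂ + y₀∧y₃∧y₄ ⊗ f₃ − y₀∧y₁∧y₃ ⊗ f₄ + (−y₀∧y₁∧y₄ + y₂∧y₃∧y₄) ⊗ f₅ + (y₀∧y₁∧y₂ − y₂∧y₃∧y₄) ⊗ f₆ ∈ ⋀³S₁ ⊗ S₃ is annihilated by the Koszul differential into ⋀²S₁ ⊗ S₄, and Γ ≠ 0. -/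

import Mathlib

/-!
The coefficient of each `y_i ∧ y_j` in `∂Γ` is a linear syzygy among the cubics `f₀, …, f₆`,
so `∂Γ = 0` is an identity of polynomial coefficients once `⋀S₁ ⊗ S` is viewed as an
`S`-module through its right factor. For `Γ ≠ 0`, pair the `y₁ ∧ y₂ ∧ y₃`-coordinate (a
determinant of coefficients) with evaluation at `(1, 0, 0, 0, 0)`: every other 3-form in `Γ`
involves `y₀` or `y₄`, so the pairing gives `-f₀(1, 0, 0, 0, 0) = -1`.
-/

open MvPolynomial TensorProduct ExteriorAlgebra

variable (k : Type*) [Field k]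

/-- `y_a ∧ y_b ∧ y_c` in the exterior algebra of the linear forms. -/
noncomputable def w3 (a b c : Fin 5) : ExteriorAlgebra k (MvPolynomial (Fin 5) k) :=
  ι k (X a) * ι k (X b) * ι k (X c)

/-- The simple tensor `(y_a ∧ y_b ∧ y_c) ⊗ f ∈ ⋀³S₁ ⊗ S`. -/
noncomputable def wT (a b c : Fin 5) (f : MvPolynomial (Fin 5) k) :
    ExteriorAlgebra k (MvPolynomial (Fin 5) k) ⊗[k] MvPolynomial (Fin 5) k :=
  w3 k a b c ⊗ₜ[k] f

/-- The Koszul differential applied to `y_a ∧ y_b ∧ y_c ⊗ f`, namely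
`a∧b ⊗ cf − a∧c ⊗ bf + b∧c ⊗ af`. -/
noncomputable def dK3 (a b c : Fin 5) (f : MvPolynomial (Fin 5) k) :
    ExteriorAlgebra k (MvPolynomial (Fin 5) k) ⊗[k] MvPolynomial (Fin 5) k :=
  (ι k (X a) * ι k (X b)) ⊗ₜ[k] (X c * f) - (ι k (X a) * ι k (X c)) ⊗ₜ[k] (X b * f)
    + (ι k (X b) * ι k (X c)) ⊗ₜ[k] (X a * f)

namespace ExteriorAlgebra

variable {R V : Type*} [CommRing R] [AddCommGroup V] [Module R V] {n : ℕ}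

noncomputable def detForm (ℓ : V →ₗ[R] Fin n → R) : ExteriorAlgebra R V →ₗ[R] R :=
  liftAlternating (Pi.single n (Matrix.detRowAlternating.compLinearMap ℓ))

theorem detForm_ιMulti (ℓ : V →ₗ[R] Fin n → R) (v : Fin n → V) :
    detForm ℓ (ιMulti R n v) = (Matrix.of fun i => ℓ (v i)).det := by
  rw [detForm, liftAlternating_apply_ιMulti, Pi.single_eq_same]
  rfl

theorem detForm_ι_mul_ι_mul_ι (ℓ : V →ₗ[R] Fin 3 → R) (u v w : V) :
    detForm ℓ (ι R u * ι R v * ι R w) = (Matrix.of ![ℓ u, ℓ v, ℓ w]).det := by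
  have h : ι R u * ι R v * ι R w = ιMulti R 3 ![u, v, w] := by
    simp [ιMulti_apply, mul_assoc]
  rw [h, detForm_ιMulti]
  congr 1
  ext i j
  fin_cases i <;> rfl

end ExteriorAlgebra

namespace Algebra.TensorProduct

variable {R A B : Type*} [CommSemiring R] [Semiring A] [Algebra R A] [CommSemiring B] [Algebra R B]

attribute [local instance] rightAlgebra

theorem tmul_eq_smul_tmul_one (a : A) (b : B) : a ⊗ₜ[R] b = b • (a ⊗ₜ[R] (1 : B)) := by
  rw [Algebra.smul_def, right_algebraMap_apply, tmul_mul_tmul, one_mul, mul_one]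

end Algebra.TensorProduct

section

variable {k}

attribute [local instance] Algebra.TensorProduct.rightAlgebra

theorem dK3_eq_smul (a b c : Fin 5) (f : MvPolynomial (Fin 5) k) :
    dK3 k a b c f = (X c * f) • ((ι k (X a) * ι k (X b)) ⊗ₜ[k] (1 : MvPolynomial (Fin 5) k))
      - (X b * f) • ((ι k (X a) * ι k (X c)) ⊗ₜ[k] (1 : MvPolynomial (Fin 5) k))
      + (X a * f) • ((ι k (X b) * ι k (X c)) ⊗ₜ[k] (1 : MvPolynomial (Fin 5) k)) := by
  simp only [dK3, ← Algebra.TensorProduct.tmul_eq_smul_tmul_one]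

end

theorem veronese_highest_koszul_cycle
    (f0 f1 f2 f3 f4 f5 f6 : MvPolynomial (Fin 5) k)
    (hf0 : f0 = X 0 ^ 3 - X 0 * X 3 ^ 2 + X 0 * X 2 * X 4 + X 1 * X 3 * X 4 - X 0 * X 4 ^ 2)
    (hf1 : f1 = X 0 ^ 2 * X 1 - X 1 * X 3 ^ 2 + X 0 * X 3 * X 4)
    (hf2 : f2 = X 0 * X 1 ^ 2 + X 1 * X 2 * X 3 - X 0 * X 3 ^ 2)
    (hf3 : f3 = X 1 ^ 3 - X 1 * X 2 ^ 2 + X 0 * X 2 * X 3 - X 1 * X 3 ^ 2 + X 1 * X 2 * X 4)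
    (hf4 : f4 = X 0 ^ 2 * X 2 - X 2 * X 3 ^ 2 - X 1 ^ 2 * X 4 + X 2 ^ 2 * X 4
      + X 3 ^ 2 * X 4 - X 2 * X 4 ^ 2)
    (hf5 : f5 = X 0 * X 1 * X 2 + X 1 ^ 2 * X 3 - X 3 ^ 3 + X 2 * X 3 * X 4)
    (hf6 : f6 = X 0 ^ 2 * X 3 - X 3 ^ 3 + X 0 * X 1 * X 4 + X 2 * X 3 * X 4)
    (Γ : ExteriorAlgebra k (MvPolynomial (Fin 5) k) ⊗[k] MvPolynomial (Fin 5) k)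
    (hΓ : Γ = -wT k 1 2 3 f0 + wT k 0 2 3 f1 - wT k 1 2 4 f1 + wT k 0 2 4 f2
      - wT k 1 3 4 f2 + wT k 0 3 4 f3 - wT k 0 1 3 f4 - wT k 0 1 4 f5
      + wT k 2 3 4 f5 + wT k 0 1 2 f6 - wT k 2 3 4 f6) :
    (-dK3 k 1 2 3 f0 + dK3 k 0 2 3 f1 - dK3 k 1 2 4 f1 + dK3 k 0 2 4 f2
      - dK3 k 1 3 4 f2 + dK3 k 0 3 4 f3 - dK3 k 0 1 3 f4 - dK3 k 0 1 4 f5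
      + dK3 k 2 3 4 f5 + dK3 k 0 1 2 f6 - dK3 k 2 3 4 f6 = 0) ∧ Γ ≠ 0 := by
  subst hf0 hf1 hf2 hf3 hf4 hf5 hf6 hΓ
  constructor
  · let := Algebra.TensorProduct.rightAlgebra (R := k)
      (A := ExteriorAlgebra k (MvPolynomial (Fin 5) k)) (B := MvPolynomial (Fin 5) k)
    simp only [dK3_eq_smul]
    module
  · let ℓ : MvPolynomial (Fin 5) k →ₗ[k] Fin 3 → k :=
      LinearMap.pi fun i => lcoeff k (Finsupp.single (![1, 2, 3] i) 1)
    let L := TensorProduct.lift ((LinearMap.mul k k).compl₁₂ (detForm ℓ)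
      (aeval (![1, 0, 0, 0, 0] : Fin 5 → k)).toLinearMap)
    intro hΓ
    have hLΓ := congrArg L hΓ
    simp [L, ℓ, wT, w3, detForm_ι_mul_ι_mul_ι, Matrix.det_fin_three, LinearMap.pi_apply, coeff_X,
      Finsupp.single_eq_single_iff] at hLΓ
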